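/- Let D ≥ 1, let α ∈ ℕᴰ be a multi-index, and let t, t₀ ∈ ℝᴰ. Then the multivariate Hermite function has the everywhere-convergent Taylor expansion h_α(t) = Σ_{β ∈ ℕᴰ} ((t − t₀)^β / β!) (−1)^{|β|} h_{α+β}(t₀), where the multi-index family is summable. -/

import Mathlib

open Finset

/-- The `n`-th Hermite function: `hₙ(t) = (−1)ⁿ (dⁿ/dtⁿ) e^{−t²}`. -/
noncomputable def hermiteFun (n : ℕ) (t : ℝ) : ℝ :=
  (-1 : ℝ) ^ n * iteratedDeriv n (fun x => Real.exp (-x ^ 2)) t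

/-- Multivariate Hermite function `h_α(x) = ∏_{d} h_{α[d]}(x[d])`. -/
noncomputable def hermiteFunMulti {D : ℕ} (α : Fin D → ℕ) (x : Fin D → ℝ) : ℝ :=
  ∏ d, hermiteFun (α d) (x d)

/-- Multi-index factorial `β! = ∏_d (β[d])!`. -/
def mFactorial {D : ℕ} (β : Fin D → ℕ) : ℕ := ∏ d, Nat.factorial (β d)

/-- Multi-index power `x^β = ∏_d (x[d])^{β[d]}`. -/
def mPow {D : ℕ} (x : Fin D → ℝ) (β : Fin D → ℕ) : ℝ := ∏ d, (x d) ^ (β d)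

/-- Multi-index degree `|β| = Σ_d β[d]`. -/
def mDeg {D : ℕ} (β : Fin D → ℕ) : ℕ := ∑ d, β d

/-!
The Gaussian `e^{-x²}` is the restriction of the entire function `e^{-z²}`, so every derivative
of it (in particular `hₙ`) is the sum of its Taylor series on all of `ℝ`; since
`(d/dt)ᵏ hₙ = (-1)ᵏ hₙ₊ₖ`, this is the case `D = 1`. Unconditionally summable real series are
absolutely summable, so the `D` one-dimensional expansions may be multiplied termwise, and the
product of the expansions of the `h_{α[d]}` is the expansion indexed by `ℕᴰ`.
-/

open scoped Nat

theorem iteratedDeriv_iteratedDeriv {𝕜 E : Type*} [NontriviallyNormedField 𝕜]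
    [NormedAddCommGroup E] [NormedSpace 𝕜 E] (f : 𝕜 → E) (m n : ℕ) :
    iteratedDeriv m (iteratedDeriv n f) = iteratedDeriv (n + m) f := by
  simp only [iteratedDeriv_eq_iterate, ← Function.iterate_add_apply, add_comm]

theorem iteratedDeriv_eq_re_of_eq_re {f : ℝ → ℝ} {F : ℂ → ℂ} (hF : Differentiable ℂ F)
    (hf : ∀ x : ℝ, f x = (F x).re) (n : ℕ) (x : ℝ) :
    iteratedDeriv n f x = (iteratedDeriv n F x).re := by
  induction n generalizing f F with
  | zero => simpa using hf x
  | succ n ih =>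
    obtain rfl : f = fun y : ℝ => (F y).re := funext hf
    rw [iteratedDeriv_succ', iteratedDeriv_succ']
    exact ih hF.deriv fun y => (hF y).hasDerivAt.real_of_complex.deriv

theorem hasSum_taylorSeries_of_eq_re {f : ℝ → ℝ} {F : ℂ → ℂ} (hF : Differentiable ℂ F)
    (hf : ∀ x : ℝ, f x = (F x).re) (t₀ t : ℝ) :
    HasSum (fun k => (t - t₀) ^ k / k ! * iteratedDeriv k f t₀) (f t) := by
  rw [hf]
  refine ((Complex.hasSum_taylorSeries_of_entire hF t₀ t).mapL Complex.reCLM).congr_fun fun k => ?_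
  rw [iteratedDeriv_eq_re_of_eq_re hF hf, Complex.reCLM_apply, smul_eq_mul, smul_eq_mul,
    ← mul_assoc, ← Complex.ofReal_sub, ← Complex.ofReal_pow, ← Complex.ofReal_natCast,
    ← Complex.ofReal_inv, ← Complex.ofReal_mul, Complex.re_ofReal_mul, inv_mul_eq_div]

theorem exp_neg_sq_eq_re (x : ℝ) : Real.exp (-x ^ 2) = (Complex.exp (-(x : ℂ) ^ 2)).re := by
  rw [← Complex.ofReal_pow, ← Complex.ofReal_neg, ← Complex.ofReal_exp, Complex.ofReal_re]

theorem hasSum_hermiteFun_taylor (n : ℕ) (t t₀ : ℝ) :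
    HasSum (fun k => (t - t₀) ^ k / k ! * (-1 : ℝ) ^ k * hermiteFun (n + k) t₀)
      (hermiteFun n t) := by
  have hgauss : Differentiable ℂ fun z : ℂ => Complex.exp (-z ^ 2) := by fun_prop
  have hG : Differentiable ℂ (iteratedDeriv n fun z : ℂ => Complex.exp (-z ^ 2)) :=
    hgauss.contDiff.differentiable_iteratedDeriv (n := ⊤) n (WithTop.coe_lt_top _)
  have htaylor := hasSum_taylorSeries_of_eq_re hG
    (iteratedDeriv_eq_re_of_eq_re hgauss exp_neg_sq_eq_re n) t₀ t
  simp only [iteratedDeriv_iteratedDeriv] at htaylor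
  refine (htaylor.mul_left ((-1) ^ n)).congr_fun fun k => ?_
  have hsign : (-1 : ℝ) ^ k * (-1) ^ (n + k) = (-1) ^ n := by
    rw [pow_add, mul_left_comm, ← mul_pow, neg_one_mul, neg_neg, one_pow, mul_one]
  simp only [hermiteFun]
  linear_combination (t - t₀) ^ k / k ! *
    iteratedDeriv (n + k) (fun x : ℝ => Real.exp (-x ^ 2)) t₀ * hsign

theorem hasSum_prod_fin_pi {ι : Type*} {D : ℕ} {f : Fin D → ι → ℝ} {a : Fin D → ℝ}
    (hf : ∀ d, HasSum (f d) (a d)) :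
    HasSum (fun β : Fin D → ι => ∏ d, f d (β d)) (∏ d, a d) := by
  induction D with
  | zero => simp
  | succ D ih =>
    have htail := ih fun d => hf d.succ
    have hsummable : Summable fun p : ι × (Fin D → ι) => f 0 p.1 * ∏ d, f d.succ (p.2 d) := by
      apply summable_mul_of_summable_norm (hf 0).summable.norm htail.summable.norm
    have hcons (p : ι × (Fin D → ι)) :
        ∏ d, f d (Fin.consEquiv (fun _ => ι) p d) = f 0 p.1 * ∏ d, f d.succ (p.2 d) := by
      simp only [Fin.consEquiv_apply, Fin.prod_univ_succ, Fin.cons_zero, Fin.cons_succ]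
    rw [Fin.prod_univ_succ, ← (Fin.consEquiv fun _ => ι).hasSum_iff]
    exact ((hf 0).mul htail hsummable).congr_fun hcons

theorem hermiteFunMulti_taylor_general (D : ℕ) (α : Fin D → ℕ) (t t₀ : Fin D → ℝ) :
    HasSum
      (fun β : Fin D → ℕ =>
        mPow (fun d => t d - t₀ d) β / (mFactorial β : ℝ) * (-1 : ℝ) ^ (mDeg β) *
          hermiteFunMulti (fun d => α d + β d) t₀)
      (hermiteFunMulti α t) := by
  refine (hasSum_prod_fin_pi fun d => hasSum_hermiteFun_taylor (α d) (t d) (t₀ d)).congr_fun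
    fun β => ?_
  simp only [mPow, mFactorial, mDeg, hermiteFunMulti, Nat.cast_prod,
    ← Finset.prod_pow_eq_pow_sum, ← Finset.prod_div_distrib, ← Finset.prod_mul_distrib]

/-- Everywhere-convergent multivariate Taylor expansion of the Hermite function:
`h_α(t) = Σ_{β ∈ ℕᴰ} ((t − t₀)^β / β!) (−1)^{|β|} h_{α+β}(t₀)`. -/
theorem hermiteFunMulti_taylor (D : ℕ) (hD : 1 ≤ D) (α : Fin D → ℕ) (t t₀ : Fin D → ℝ) :
    HasSum
      (fun β : Fin D → ℕ =>
        mPow (fun d => t d - t₀ d) β / (mFactorial β : ℝ) * (-1 : ℝ) ^ (mDeg β) *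
          hermiteFunMulti (fun d => α d + β d) t₀)
      (hermiteFunMulti α t) :=
  hermiteFunMulti_taylor_general D α t t₀
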